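/- Let n be even and d ≥ 0 an integer. Let x : [n] → {−1, 0, +1} be such that at most n/2 coordinates equal +1, at most n/2 coordinates equal −1, at least 3d + 1 coordinates equal 0, and |Σ_{i=1}^{j} x_i| ≤ d for every 1 ≤ j ≤ n. Then there exists y : [n] → {−1, +1} with y_i = x_i whenever x_i ≠ 0, Σ_{i=1}^{n} y_i = 0, and |Σ_{i=1}^{j} y_i| > d for some 1 ≤ j ≤ n. -/
import Mathlib

private def Zc (x : ℕ → ℤ) (j : ℕ) : ℕ := ((Finset.range j).filter fun i => x i = 0).card

private lemma Zc_succ (x : ℕ → ℤ) (j : ℕ) :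
    Zc x (j+1) = Zc x j + (if x j = 0 then 1 else 0) := by
  unfold Zc
  rw [Finset.range_add_one, Finset.filter_insert]
  by_cases h : x j = 0
  · rw [if_pos h, if_pos h, Finset.card_insert_of_notMem (by simp [Finset.mem_filter])]
  · rw [if_neg h, if_neg h, add_zero]

private lemma Zc_ivt (x : ℕ → ℤ) : ∀ m k, k ≤ Zc x m → ∃ t, t ≤ m ∧ Zc x t = k := by
  intro m
  induction m with
  | zero =>
    intro k hk
    simp [Zc] at hk
    exact ⟨0, le_refl 0, by simp [Zc, hk]⟩
  | succ m ih =>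
    intro k hk
    rcases le_or_gt k (Zc x m) with h | h
    · obtain ⟨t, ht, hZ⟩ := ih k h
      exact ⟨t, Nat.le_succ_of_le ht, hZ⟩
    · have h2 : Zc x (m+1) ≤ Zc x m + 1 := by rw [Zc_succ]; split <;> omega
      exact ⟨m+1, le_rfl, by omega⟩

private lemma sum_completion (x : ℕ → ℤ) (c : ℤ) (t : ℕ) (j : ℕ) :
    ∑ i ∈ Finset.range j, (if x i = 0 then (if i < t then c else -c) else x i)
      = (∑ i ∈ Finset.range j, x i) + c * (2 * (Zc x (min j t) : ℤ) - (Zc x j : ℤ)) := by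
  induction j with
  | zero => simp [Zc]
  | succ j ih =>
    rw [Finset.sum_range_succ, Finset.sum_range_succ (f := x), ih]
    rcases lt_or_ge j t with h | h
    · have h1 : min j t = j := by omega
      have h2 : min (j+1) t = j + 1 := by omega
      rw [h1, h2, Zc_succ x j]
      by_cases hx : x j = 0 <;> simp [hx, h] <;> ring
    · have h1 : min j t = t := by omega
      have h2 : min (j+1) t = t := by omega
      have h3 : ¬ j < t := by omega
      rw [h1, h2, Zc_succ x j]
      by_cases hx : x j = 0 <;> simp [hx, h3] <;> ring

private lemma parity_lemma (n : ℕ) (hn : Even n) (x : ℕ → ℤ)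
    (hx : ∀ i < n, x i = -1 ∨ x i = 0 ∨ x i = 1) :
    Even ((Zc x n : ℤ) - ∑ i ∈ Finset.range n, x i) := by
  have key : ∑ i ∈ Finset.range n, (x i + 1 - (if x i = 0 then (1:ℤ) else 0))
      = ∑ i ∈ Finset.range n, (if x i = 1 then (2:ℤ) else 0) := by
    apply Finset.sum_congr rfl
    intro i hi
    rcases hx i (Finset.mem_range.mp hi) with h | h | h <;> simp [h]
  have h1 : ∑ i ∈ Finset.range n, (if x i = 0 then (1:ℤ) else 0) = (Zc x n : ℤ) := by
    simp [Zc, Finset.sum_boole]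
  have h2 : ∑ i ∈ Finset.range n, (if x i = 1 then (2:ℤ) else 0)
      = 2 * (((Finset.range n).filter fun i => x i = 1).card : ℤ) := by
    rw [Finset.sum_ite, Finset.sum_const, Finset.sum_const]
    simp [mul_comm]
  have h3 : ∑ i ∈ Finset.range n, (x i + 1 - (if x i = 0 then (1:ℤ) else 0))
      = (∑ i ∈ Finset.range n, x i) + n - (Zc x n : ℤ) := by
    rw [Finset.sum_sub_distrib, Finset.sum_add_distrib, h1]
    simp
  rw [h3, h2] at key
  obtain ⟨m, hm⟩ := hn
  refine ⟨(m : ℤ) - ((Finset.range n).filter fun i => x i = 1).card, by omega⟩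


private lemma main_lemma (n : ℕ) (hn : Even n) (d : ℕ) (x : ℕ → ℤ)
    (hx : ∀ i < n, x i = -1 ∨ x i = 0 ∨ x i = 1)
    (hunq : 3 * d + 1 ≤ ((Finset.range n).filter fun i => x i = 0).card)
    (hdisc : ∀ j, 1 ≤ j → j ≤ n → |∑ i ∈ Finset.range j, x i| ≤ (d : ℤ))
    (hS : 0 ≤ ∑ i ∈ Finset.range n, x i) :
    ∃ y : ℕ → ℤ, (∀ i < n, y i = -1 ∨ y i = 1) ∧
      (∀ i < n, x i ≠ 0 → y i = x i) ∧
      (∑ i ∈ Finset.range n, y i = 0) ∧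
      ∃ j, 1 ≤ j ∧ j ≤ n ∧ (d : ℤ) < |∑ i ∈ Finset.range j, y i| := by
  have hz : 3 * d + 1 ≤ Zc x n := hunq
  have hn1 : 1 ≤ n := by
    by_contra h
    have hn0 : n = 0 := by omega
    subst hn0
    simp [Zc] at hz
  have hSd : (∑ i ∈ Finset.range n, x i) ≤ (d:ℤ) :=
    le_trans (le_abs_self _) (hdisc n hn1 le_rfl)
  obtain ⟨c0, hc0⟩ := parity_lemma n hn x hx
  have hc0' : (d:ℤ) + 1 ≤ c0 := by omega
  set A : ℕ := c0.toNat with hA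
  have hAc : (A:ℤ) = c0 := Int.toNat_of_nonneg (by omega)
  set B : ℕ := Zc x n - A with hB
  have hAB : A + B = Zc x n := by omega
  have hBA : (B:ℤ) - (A:ℤ) = ∑ i ∈ Finset.range n, x i := by omega
  have hAd : d + 1 ≤ A := by omega
  have hBd : d + 1 ≤ B := by omega
  have hAleB : A ≤ B := by omega
  obtain ⟨tb, htb, hZb⟩ := Zc_ivt x n B (by omega)
  obtain ⟨ta, hta, hZa⟩ := Zc_ivt x tb A (by omega)
  have htb1 : 1 ≤ tb := by
    rcases Nat.eq_zero_or_pos tb with h | h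
    · exfalso; rw [h] at hZb; simp [Zc] at hZb; omega
    · exact h
  by_cases hcase : (∑ i ∈ Finset.range tb, x i) - B < -(d:ℤ)
  · -- assign -1 to zeros before tb, +1 after
    refine ⟨fun i => if x i = 0 then (if i < tb then (-1:ℤ) else 1) else x i, ?_, ?_, ?_, tb, htb1, htb, ?_⟩
    · intro i hi
      by_cases h : x i = 0
      · simp only [h, if_true]; split <;> simp
      · simp only [h, if_neg h]
        rcases hx i hi with h' | h' | h' <;> simp [h'] at h ⊢
    · intro i _ h; simp [h]
    · have := sum_completion x (-1) tb n
      rw [show (fun i => if x i = 0 then (if i < tb then (-1:ℤ) else 1) else x i)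
          = (fun i => if x i = 0 then (if i < tb then (-1:ℤ) else -(-1)) else x i) from (by norm_num)]
      rw [this, min_eq_right htb, hZb]
      omega
    · have := sum_completion x (-1) tb tb
      rw [show (fun i => if x i = 0 then (if i < tb then (-1:ℤ) else 1) else x i)
          = (fun i => if x i = 0 then (if i < tb then (-1:ℤ) else -(-1)) else x i) from (by norm_num)]
      rw [this, min_self, hZb]
      rw [abs_of_neg (by omega)]
      omega
  · -- assign +1 to zeros before ta, -1 after
    have hXtb : (B:ℤ) - d ≤ ∑ i ∈ Finset.range tb, x i := by omega
    refine ⟨fun i => if x i = 0 then (if i < ta then (1:ℤ) else -1) else x i, ?_, ?_, ?_, tb, htb1, htb, ?_⟩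
    · intro i hi
      by_cases h : x i = 0
      · simp only [h, if_true]; split <;> simp
      · simp only [h, if_neg h]
        rcases hx i hi with h' | h' | h' <;> simp [h'] at h ⊢
    · intro i _ h; simp [h]
    · have := sum_completion x 1 ta n
      simp only [neg_neg] at this ⊢
      rw [this, min_eq_right (le_trans hta htb), hZa]
      omega
    · have := sum_completion x 1 ta tb
      simp only [neg_neg] at this ⊢
      rw [this, min_eq_right hta, hZa]
      have h2 : (d:ℤ) < (∑ i ∈ Finset.range tb, x i) + 1 * (2 * A - (Zc x tb : ℤ)) := by
        rw [hZb]; omega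
      exact lt_of_lt_of_le h2 (le_abs_self _)

theorem stmt_10 (n : ℕ) (hn : Even n) (d : ℕ) (x : ℕ → ℤ)
    (hx : ∀ i < n, x i = -1 ∨ x i = 0 ∨ x i = 1)
    (hplus : ((Finset.range n).filter fun i => x i = 1).card ≤ n / 2)
    (hminus : ((Finset.range n).filter fun i => x i = -1).card ≤ n / 2)
    (hunq : 3 * d + 1 ≤ ((Finset.range n).filter fun i => x i = 0).card)
    (hdisc : ∀ j, 1 ≤ j → j ≤ n → |∑ i ∈ Finset.range j, x i| ≤ (d : ℤ)) :
    ∃ y : ℕ → ℤ, (∀ i < n, y i = -1 ∨ y i = 1) ∧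
      (∀ i < n, x i ≠ 0 → y i = x i) ∧
      (∑ i ∈ Finset.range n, y i = 0) ∧
      ∃ j, 1 ≤ j ∧ j ≤ n ∧ (d : ℤ) < |∑ i ∈ Finset.range j, y i| := by
  rcases le_or_gt 0 (∑ i ∈ Finset.range n, x i) with h | h
  · exact main_lemma n hn d x hx hunq hdisc h
  · have hx' : ∀ i < n, -x i = -1 ∨ -x i = 0 ∨ -x i = 1 := by
      intro i hi; rcases hx i hi with h' | h' | h' <;> simp [h']
    have hunq' : 3 * d + 1 ≤ ((Finset.range n).filter fun i => -x i = 0).card := by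
      have : ((Finset.range n).filter fun i => -x i = 0)
          = ((Finset.range n).filter fun i => x i = 0) := by
        apply Finset.filter_congr; intro i _; simp
      rw [this]; exact hunq
    have hdisc' : ∀ j, 1 ≤ j → j ≤ n → |∑ i ∈ Finset.range j, -x i| ≤ (d : ℤ) := by
      intro j h1 h2
      rw [Finset.sum_neg_distrib, abs_neg]
      exact hdisc j h1 h2
    have hS' : 0 ≤ ∑ i ∈ Finset.range n, -x i := by
      rw [Finset.sum_neg_distrib]; omega
    obtain ⟨y, h1, h2, h3, j, hj1, hj2, hj3⟩ := main_lemma n hn d (fun i => -x i) hx' hunq' hdisc' hS'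
    refine ⟨fun i => -y i, ?_, ?_, ?_, j, hj1, hj2, ?_⟩
    · intro i hi; rcases h1 i hi with h' | h' <;> simp [h']
    · intro i hi hxi
      have := h2 i hi (by simpa using hxi)
      simp at this ⊢
      omega
    · rw [Finset.sum_neg_distrib]; omega
    · rw [Finset.sum_neg_distrib, abs_neg]; exact hj3
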